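/- For a measurable function h with E|h(G)| < ∞ where G is Fréchet(α), the function φ_h(x) = e^{x^{-α}} ∫_0^x (h(y) - E h(G)) y^{-α-1} e^{-y^{-α}} dy satisfies the Stein equation φ_h'(x) x^{α+1} + α φ_h(x) = h(x) - E h(G) for all x > 0. -/

import Mathlib

open Real MeasureTheory Filter Set
open scoped Topology

/-!
With `w y = y ^ (-α - 1) * exp (-y ^ (-α))` and `g = (h - μh) * w`, the function
`φh x = exp (x ^ (-α)) * ∫₀ˣ g` is a product whose first factor has derivative
`-α x ^ (-α - 1) exp (x ^ (-α))`, and whose second factor has derivative `g x` by the fundamental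
theorem of calculus. Multiplying `φh'` by `x ^ (α + 1)` turns the first term of the product rule
into `-α φh x` and the second into `h x - μh`. The integral converges at `0` because `α w` is
the derivative of the Fréchet distribution function `exp (-y ^ (-α))`, which increases from `0`.
-/

theorem integrableOn_Ioc_deriv_of_nonneg_of_tendsto {G g' : ℝ → ℝ} {a b l : ℝ}
    (hcont : ∀ x ∈ Ioc a b, ContinuousAt G x) (hlim : Tendsto G (𝓝[>] a) (𝓝 l))
    (hderiv : ∀ x ∈ Ioo a b, HasDerivAt G (g' x) x) (hpos : ∀ x ∈ Ioo a b, 0 ≤ g' x) :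
    IntegrableOn g' (Ioc a b) := by
  classical
  refine intervalIntegral.integrableOn_deriv_of_nonneg (g := Function.update G a l)
    (fun x hx => ?_) (fun x hx => ?_) hpos
  · rcases hx.1.eq_or_lt with rfl | hax
    · rw [continuousWithinAt_update_same]
      exact hlim.mono_left (nhdsWithin_mono _ fun y hy => lt_of_le_of_ne hy.1.1 (Ne.symm hy.2))
    · exact ((continuousAt_update_of_ne hax.ne').2 (hcont x ⟨hax, hx.2⟩)).continuousWithinAt
  · refine (hderiv x hx).congr_of_eventuallyEq ?_
    filter_upwards [Ioi_mem_nhds hx.1] with y hy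
    exact Function.update_of_ne hy.ne' _ _

theorem hasDerivAt_setIntegral_Ioo {E : Type*} [NormedAddCommGroup E] [NormedSpace ℝ E]
    [CompleteSpace E] {g : ℝ → E} {a x : ℝ} (hax : a < x)
    (hcont : ContinuousOn g (Ioi a)) (hint : IntegrableOn g (Ioc a x)) :
    HasDerivAt (fun t => ∫ y in Ioo a t, g y) (g x) x := by
  have hii : IntervalIntegrable g volume a x := by
    rwa [intervalIntegrable_iff, uIoc_of_le hax.le]
  refine (intervalIntegral.integral_hasDerivAt_right hii
    (hcont.stronglyMeasurableAtFilter isOpen_Ioi x hax)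
    (hcont.continuousAt (Ioi_mem_nhds hax))).congr_of_eventuallyEq ?_
  filter_upwards [Ioi_mem_nhds hax] with t ht
  rw [intervalIntegral.integral_of_le ht.le, integral_Ioc_eq_integral_Ioo]

section Frechet

variable {α : ℝ}

theorem tendsto_exp_neg_rpow_neg_nhdsGT_zero (hα : 0 < α) :
    Tendsto (fun y : ℝ => exp (-(y ^ (-α)))) (𝓝[>] 0) (𝓝 0) :=
  tendsto_exp_neg_atTop_nhds_zero.comp (tendsto_rpow_neg_nhdsGT_zero (neg_neg_of_pos hα))

theorem continuousOn_rpow_mul_exp_neg_rpow (β : ℝ) :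
    ContinuousOn (fun y : ℝ => y ^ β * exp (-(y ^ (-α)))) (Ioi 0) := by
  intro y hy
  exact ((continuousAt_rpow_const y β (Or.inl hy.ne')).mul
    (continuousAt_rpow_const y (-α) (Or.inl hy.ne')).neg.rexp).continuousWithinAt

theorem hasDerivAt_exp_neg_rpow_neg {y : ℝ} (hy : 0 < y) :
    HasDerivAt (fun t : ℝ => exp (-(t ^ (-α)))) (α * y ^ (-α - 1) * exp (-(y ^ (-α)))) y := by
  convert (hasDerivAt_rpow_const (p := -α) (Or.inl hy.ne')).fun_neg.exp using 1
  ring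

theorem integrableOn_Ioc_mul_rpow_mul_exp_neg_rpow (hα : 0 < α) (x : ℝ) :
    IntegrableOn (fun y : ℝ => α * y ^ (-α - 1) * exp (-(y ^ (-α)))) (Ioc 0 x) :=
  integrableOn_Ioc_deriv_of_nonneg_of_tendsto
    (fun y hy => (continuousAt_rpow_const y (-α) (Or.inl hy.1.ne')).neg.rexp)
    (tendsto_exp_neg_rpow_neg_nhdsGT_zero hα) (fun y hy => hasDerivAt_exp_neg_rpow_neg hy.1)
    (fun y hy => by have := rpow_pos_of_pos hy.1 (-α - 1); positivity)

theorem integrableOn_Ioc_sub_mul_rpow_mul_exp_neg_rpow {h : ℝ → ℝ} (hα : 0 < α)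
    (hcont : ContinuousOn h (Ioi 0))
    (hint : IntegrableOn (fun y => |h y| * (α * y ^ (-α - 1) * exp (-(y ^ (-α))))) (Ioi 0))
    (c x : ℝ) :
    IntegrableOn (fun y => (h y - c) * y ^ (-α - 1) * exp (-(y ^ (-α)))) (Ioc 0 x) := by
  set d : ℝ → ℝ := fun y => α * y ^ (-α - 1) * exp (-(y ^ (-α)))
  have hd : ContinuousOn d (Ioi 0) := by
    simpa only [d, mul_assoc] using
      continuousOn_const.fun_mul (continuousOn_rpow_mul_exp_neg_rpow (-α - 1))
  have hhd : IntegrableOn (fun y => h y * d y) (Ioi 0) := by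
    refine (integrable_norm_iff ((hcont.fun_mul hd).aestronglyMeasurable measurableSet_Ioi)).1 ?_
    refine IntegrableOn.congr_fun hint (fun y hy => ?_) measurableSet_Ioi
    have : 0 ≤ d y := by have := rpow_pos_of_pos hy (-α - 1); positivity
    rw [norm_mul, Real.norm_eq_abs, Real.norm_of_nonneg this]
  refine IntegrableOn.congr_fun (((hhd.mono_set Ioc_subset_Ioi_self).sub
    ((integrableOn_Ioc_mul_rpow_mul_exp_neg_rpow hα x).const_mul c)).const_mul α⁻¹)
    (fun y _ => ?_) measurableSet_Ioc
  simp only [d, Pi.sub_apply]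
  field_simp

end Frechet

theorem frechet_stein_equation_solution_general (α : ℝ) (hα : 0 < α)
    (h : ℝ → ℝ) (hcont : ContinuousOn h (Set.Ioi 0))
    (hint : IntegrableOn
      (fun y => |h y| * (α * y ^ (-α - 1) * Real.exp (-(y ^ (-α))))) (Set.Ioi 0))
    (μh : ℝ)
    (φh : ℝ → ℝ)
    (hφh : ∀ x : ℝ, 0 < x → φh x =
      Real.exp (x ^ (-α)) *
        ∫ y in Set.Ioo (0 : ℝ) x, (h y - μh) * y ^ (-α - 1) * Real.exp (-(y ^ (-α)))) :
    ∀ x : ℝ, 0 < x → deriv φh x * x ^ (α + 1) + α * φh x = h x - μh := by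
  intro x hx
  set g : ℝ → ℝ := fun y => (h y - μh) * y ^ (-α - 1) * exp (-(y ^ (-α)))
  have hg : ContinuousOn g (Ioi 0) := by
    simpa only [g, mul_assoc] using
      (hcont.fun_sub continuousOn_const).fun_mul (continuousOn_rpow_mul_exp_neg_rpow (-α - 1))
  have hG := hasDerivAt_setIntegral_Ioo hx hg
    (integrableOn_Ioc_sub_mul_rpow_mul_exp_neg_rpow hα hcont hint μh x)
  have hE := (hasDerivAt_rpow_const (p := -α) (Or.inl hx.ne')).exp
  have hφ : φh =ᶠ[𝓝 x] fun t => exp (t ^ (-α)) * ∫ y in Ioo 0 t, g y := by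
    filter_upwards [Ioi_mem_nhds hx] with t ht using hφh t ht
  have hpow : x ^ (-α - 1) * x ^ (α + 1) = 1 := by
    rw [← rpow_add hx]; norm_num
  have hexp : exp (x ^ (-α)) * exp (-(x ^ (-α))) = 1 := by
    rw [← exp_add, add_neg_cancel, exp_zero]
  rw [hφ.deriv_eq, (hE.fun_mul hG).deriv, hφh x hx]
  linear_combination (-(α * exp (x ^ (-α)) * ∫ y in Ioo 0 x, g y)) * hpow
    + (h x - μh) * (exp (x ^ (-α)) * exp (-(x ^ (-α)))) * hpow + (h x - μh) * hexp

theorem frechet_stein_equation_solution (α : ℝ) (hα : 0 < α)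
    (h : ℝ → ℝ) (hcont : ContinuousOn h (Set.Ioi 0))
    (hint : IntegrableOn
      (fun y => |h y| * (α * y ^ (-α - 1) * Real.exp (-(y ^ (-α))))) (Set.Ioi 0))
    (μh : ℝ)
    (hμh : μh = ∫ y in Set.Ioi (0 : ℝ), h y * (α * y ^ (-α - 1) * Real.exp (-(y ^ (-α)))))
    (φh : ℝ → ℝ)
    (hφh : ∀ x : ℝ, 0 < x → φh x =
      Real.exp (x ^ (-α)) *
        ∫ y in Set.Ioo (0 : ℝ) x, (h y - μh) * y ^ (-α - 1) * Real.exp (-(y ^ (-α)))) :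
    ∀ x : ℝ, 0 < x → deriv φh x * x ^ (α + 1) + α * φh x = h x - μh :=
  frechet_stein_equation_solution_general α hα h hcont hint μh φh hφh
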